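/- arXiv:2405.11041 — 11 statements merged into one kernel-verified Lean document; each statement's English description precedes it below -/
import Mathlib

section
/- Let R be a finite nontrivial commutative ring with unity and let m be a positive integer. Then R is a halidon ring with index m if and only if there exists an element ω ∈ R such that ω^m = 1, m·1 is invertible in R, and ω^d − 1 is invertible in R for every divisor d of m with 0 < d < m. -/
/-- An element `ω` of a commutative ring `R` is a primitive `m`-th root of unity
(in the halidon sense) if `ω ^ m = 1`, `ω ^ k ≠ 1` for `0 < k < m`, and for each
`0 < k < m` the sum `∑_{r=0}^{m-1} ω ^ (r k)` vanishes. -/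
def IsPrimitiveHalidonRoot {R : Type*} [CommRing R] (m : ℕ) (ω : R) : Prop :=
  ω ^ m = 1 ∧ (∀ k : ℕ, 0 < k → k < m → ω ^ k ≠ 1) ∧
    ∀ k : ℕ, 0 < k → k < m → ∑ r ∈ Finset.range m, ω ^ (r * k) = 0

/-- A commutative ring `R` with unity is a halidon ring with index `m` if `m·1` is
invertible in `R` and `R` contains a primitive `m`-th root of unity. -/
def IsHalidonRing (R : Type*) [CommRing R] (m : ℕ) : Prop :=
  IsUnit (m : R) ∧ ∃ ω : R, IsPrimitiveHalidonRoot m ω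

private lemma halidon_pow_congr {R : Type*} [CommRing R] {ω : R} {m : ℕ} (h : ω ^ m = 1)
    {e f : ℕ} (hef : e ≡ f [MOD m]) : ω ^ e = ω ^ f := by
  wlog hle : e ≤ f generalizing e f
  · exact (this hef.symm (le_of_not_ge hle)).symm
  obtain ⟨s, hs⟩ := (Nat.modEq_iff_dvd' hle).mp hef
  have hf : f = e + m * s := by omega
  rw [hf, pow_add, pow_mul, h, one_pow, mul_one]

private lemma halidon_sum_pow_mul {R : Type*} [CommRing R] {x : R} {t : ℕ} (hx : x ^ t = 1) :
    ∀ d : ℕ, ∑ r ∈ Finset.range (d * t), x ^ r = (d : R) * ∑ j ∈ Finset.range t, x ^ j := by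
  intro d
  induction d with
  | zero => simp
  | succ n ih =>
    rw [Nat.succ_mul, Finset.sum_range_add, ih]
    have hper : ∀ j, x ^ (n * t + j) = x ^ j := fun j => by
      rw [pow_add, mul_comm n t, pow_mul, hx, one_pow, one_mul]
    simp only [hper]
    push_cast; ring

/-- A finite nontrivial commutative ring `R` is a halidon ring with index `m` iff there is
`ω ∈ R` with `ω ^ m = 1`, `m` invertible in `R`, and `ω ^ d - 1` a unit for every proper
divisor `d` of `m` with `0 < d < m`. -/
theorem halidon_iff_exists_root_units {R : Type*} [CommRing R] [Fintype R] [Nontrivial R]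
    (m : ℕ) (hm : 0 < m) :
    IsHalidonRing R m ↔
      ∃ ω : R, ω ^ m = 1 ∧ IsUnit (m : R) ∧
        ∀ d : ℕ, d ∣ m → 0 < d → d < m → IsUnit (ω ^ d - 1) := by
  constructor
  · rintro ⟨hmu, ω, hωm, _hne, hsum⟩
    refine ⟨ω, hωm, hmu, ?_⟩
    intro d hd hd0 hdm
    obtain ⟨t, ht⟩ := hd
    have ht0 : 0 < t := by
      rcases Nat.eq_zero_or_pos t with h | h
      · subst h; omega
      · exact h
    have hx : (ω ^ d) ^ t = 1 := by rw [← pow_mul, ← ht, hωm]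
    set x := ω ^ d with hxdef
    have hS : ∑ r ∈ Finset.range m, ω ^ (r * d) = 0 := hsum d hd0 hdm
    have hS' : ∑ r ∈ Finset.range (d * t), x ^ r = 0 := by
      rw [← ht]
      rw [← hS]
      refine Finset.sum_congr rfl fun r _ => ?_
      rw [hxdef, ← pow_mul, mul_comm]
    rw [halidon_sum_pow_mul hx d] at hS'
    have hdu : IsUnit ((d : R)) := by
      refine isUnit_of_dvd_unit ?_ hmu
      exact_mod_cast (Nat.cast_dvd_cast (α := R) ⟨t, ht⟩ : (d : R) ∣ (m : R))
    have hT : ∑ j ∈ Finset.range t, x ^ j = 0 := by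
      rcases hdu with ⟨u, hu⟩
      have := congrArg (fun z => (↑u⁻¹ : R) * z) hS'
      simpa [← hu, ← mul_assoc] using this
    have hdvd : x - 1 ∣ (∑ j ∈ Finset.range t, x ^ j) - (t : R) := by
      have heq : (∑ j ∈ Finset.range t, x ^ j) - (t : R)
          = ∑ j ∈ Finset.range t, (x ^ j - 1) := by
        rw [Finset.sum_sub_distrib, Finset.sum_const, Finset.card_range,
          nsmul_eq_mul, mul_one]
      rw [heq]
      refine Finset.dvd_sum fun j _ => ?_
      exact ⟨∑ i ∈ Finset.range j, x ^ i, by rw [mul_comm, geom_sum_mul]⟩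
    rw [hT, zero_sub] at hdvd
    have htu : IsUnit ((t : R)) := by
      refine isUnit_of_dvd_unit ?_ hmu
      exact_mod_cast (Nat.cast_dvd_cast (α := R) ⟨d, by rw [ht]; ring⟩ : (t : R) ∣ (m : R))
    exact isUnit_of_dvd_unit hdvd htu.neg
  · rintro ⟨ω, hωm, hmu, hdiv⟩
    have key : ∀ k : ℕ, 0 < k → k < m → IsUnit (ω ^ k - 1) := by
      intro k hk hkm
      set d := Nat.gcd k m with hddef
      have hd : d ∣ m := Nat.gcd_dvd_right k m
      have hd0 : 0 < d := Nat.gcd_pos_of_pos_right k hm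
      have hdm : d < m := lt_of_le_of_lt (Nat.le_of_dvd hk (Nat.gcd_dvd_left k m)) hkm
      have hu := hdiv d hd hd0 hdm
      set a := Nat.gcdA k m with hadef
      set b := Nat.gcdB k m with hbdef
      have hbez : (d : ℤ) = k * a + m * b := Nat.gcd_eq_gcd_ab k m
      set x : ℕ := (a % m).toNat with hxdef
      have hmz : (0:ℤ) < (m:ℤ) := by exact_mod_cast hm
      have hxz : (x : ℤ) = a % m := Int.toNat_of_nonneg (Int.emod_nonneg a (by omega))
      have hmod : x * k ≡ d [MOD m] := by
        rw [Nat.modEq_iff_dvd]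
        refine ⟨b + (a / m) * k, ?_⟩
        push_cast
        rw [hxz]
        linear_combination hbez - k * Int.emod_def a m
      have hpk : ω ^ (x * k) = ω ^ d := halidon_pow_congr hωm hmod
      have hdvd : ω ^ k - 1 ∣ ω ^ d - 1 := by
        rw [← hpk, mul_comm x k, pow_mul]
        simpa using sub_dvd_pow_sub_pow (ω ^ k) 1 x
      exact isUnit_of_dvd_unit hdvd hu
    refine ⟨hmu, ω, hωm, ?_, ?_⟩
    · intro k hk hkm h1
      have hu := key k hk hkm
      rw [h1, sub_self] at hu
      exact not_isUnit_zero hu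
    · intro k hk hkm
      have hu := key k hk hkm
      have h2 : (∑ r ∈ Finset.range m, ω ^ (r * k)) * (ω ^ k - 1) = 0 := by
        have : ∑ r ∈ Finset.range m, ω ^ (r * k) = ∑ r ∈ Finset.range m, (ω ^ k) ^ r := by
          refine Finset.sum_congr rfl fun r _ => ?_
          rw [← pow_mul, mul_comm]
        rw [this, geom_sum_mul, ← pow_mul, mul_comm, pow_mul, hωm, one_pow, sub_self]
      exact (IsUnit.mul_left_eq_zero hu).mp h2
end

section
/- Let R and S be commutative rings with S nontrivial, let f : R → S be a surjective ring homomorphism, and let m be a positive integer. If ω ∈ R is a primitive m-th root of unity and m·1 is invertible in R, then f(ω) is a primitive m-th root of unity in S and m·1 is invertible in S; in particular, the homomorphic image of a commutative halidon ring with index m is again a halidon ring with index m. -/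
/-- The surjective homomorphic image of a commutative halidon ring with index `m`
is again a halidon ring with index `m`: the image of a primitive `m`-th root of unity
is a primitive `m`-th root of unity, and `m` remains invertible. -/
theorem halidon_image {R S : Type*} [CommRing R] [CommRing S] [Nontrivial S]
    (f : R →+* S) (hf : Function.Surjective f) (m : ℕ) (hm : 0 < m) (ω : R)
    (hω : IsPrimitiveHalidonRoot m ω) (hmu : IsUnit (m : R)) :
    (IsPrimitiveHalidonRoot m (f ω) ∧ IsUnit (m : S)) ∧ IsHalidonRing S m := by
  obtain ⟨h1, h2, h3⟩ := hω
  have hmuS : IsUnit (m : S) := by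
    have := hmu.map f
    simpa using this
  have hsum : ∀ k : ℕ, 0 < k → k < m →
      ∑ r ∈ Finset.range m, (f ω) ^ (r * k) = 0 := by
    intro k hk hkm
    have := congrArg f (h3 k hk hkm)
    simpa [map_sum, map_pow] using this
  have hpow : (f ω) ^ m = 1 := by
    have := congrArg f h1
    simpa [map_pow] using this
  have hne : ∀ k : ℕ, 0 < k → k < m → (f ω) ^ k ≠ 1 := by
    intro k hk hkm heq
    have hs := hsum k hk hkm
    have : ∑ r ∈ Finset.range m, (f ω) ^ (r * k) = (m : S) := by
      rw [Finset.sum_congr rfl fun r _ => by rw [mul_comm, pow_mul, heq, one_pow]]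
      simp
    rw [this] at hs
    exact hmuS.ne_zero hs
  have hprim : IsPrimitiveHalidonRoot m (f ω) := ⟨hpow, hne, hsum⟩
  exact ⟨⟨hprim, hmuS⟩, hmuS, f ω, hprim⟩
end

section
/- Let p be an odd prime and k ≥ 1 an integer. Then the ring ZMod(p^k) of integers modulo p^k is a halidon ring with index m = p − 1; moreover, if ω ∈ ZMod(p^k) is a unit of multiplicative order φ(p^k) = p^{k−1}(p−1), then ω_1 = ω^{p^{k−1}} is a primitive (p−1)-th root of unity in ZMod(p^k). -/
/-! In `ZMod (p ^ k)` every non-unit is nilpotent and `p - 1` is a unit. Hence a root of unity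
`u` of order dividing `p - 1` with `u - 1` nilpotent is `1`, since
`0 = u ^ (p - 1) - 1 = (u - 1) * (p - 1 + nilpotent)`. So for `ω` of order `p - 1` and
`0 < k < p - 1`, `ω ^ k - 1` is a unit, and the geometric sum `∑ (ω ^ k) ^ r`, killed by
`ω ^ k - 1`, vanishes. An `ω` of order `p - 1` exists because the order of a generator of
`(ZMod p)ˣ` divides the order of any of its lifts to `(ZMod (p ^ k))ˣ`. -/

theorem eq_one_of_pow_eq_one_of_isNilpotent_sub_one {R : Type*} [CommRing R] {m : ℕ}
    (hm : IsUnit (m : R)) {u : R} (hu : u ^ m = 1) (hnil : IsNilpotent (u - 1)) : u = 1 := by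
  obtain ⟨c, hc⟩ : u - 1 ∣ ∑ i ∈ Finset.range m, u ^ i - m := by
    have : ∑ i ∈ Finset.range m, u ^ i - m = ∑ i ∈ Finset.range m, (u ^ i - 1 ^ i) := by
      simp [Finset.sum_sub_distrib]
    exact this ▸ Finset.dvd_sum fun i _ => sub_dvd_pow_sub_pow u 1 i
  have hunit : IsUnit (∑ i ∈ Finset.range m, u ^ i) := by
    rw [← sub_add_cancel (∑ i ∈ Finset.range m, u ^ i) m, hc, add_comm]
    exact ((Commute.all _ _).isNilpotent_mul_right hnil).isUnit_add_left_of_commute hm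
      (Commute.all _ _)
  have hzero : (u - 1) * ∑ i ∈ Finset.range m, u ^ i = 0 := by
    rw [mul_comm, geom_sum_mul, hu, sub_self]
  exact sub_eq_zero.mp ((hunit.mul_left_eq_zero).mp hzero)

theorem isPrimitiveHalidonRoot_of_orderOf_eq {R : Type*} [CommRing R]
    (hR : ∀ x : R, IsUnit x ∨ IsNilpotent x) {m : ℕ} (hm : IsUnit (m : R)) {ω : R}
    (hω : orderOf ω = m) : IsPrimitiveHalidonRoot m ω := by
  refine ⟨hω ▸ pow_orderOf_eq_one ω, fun k hk hkm => pow_ne_one_of_lt_orderOf hk.ne' (hω ▸ hkm),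
    fun k hk hkm => ?_⟩
  have hne : ω ^ k ≠ 1 := pow_ne_one_of_lt_orderOf hk.ne' (hω ▸ hkm)
  have hpow : (ω ^ k) ^ m = 1 := by
    rw [← pow_mul, mul_comm, pow_mul, ← hω, pow_orderOf_eq_one, one_pow]
  have hunit : IsUnit (ω ^ k - 1) := (hR _).resolve_right fun hnil =>
    hne (eq_one_of_pow_eq_one_of_isNilpotent_sub_one hm hpow hnil)
  have hzero : (∑ r ∈ Finset.range m, (ω ^ k) ^ r) * (ω ^ k - 1) = 0 := by
    rw [geom_sum_mul, hpow, sub_self]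
  simpa only [← pow_mul, mul_comm k] using hunit.mul_left_eq_zero.mp hzero

theorem exists_orderOf_eq_of_surjective {G H : Type*} [Group G] [Finite G] [Monoid H]
    {f : G →* H} (hf : Function.Surjective f) (h : H) : ∃ g : G, orderOf g = orderOf h := by
  obtain ⟨g, rfl⟩ := hf h
  exact ⟨g ^ (orderOf g / orderOf (f g)),
    orderOf_pow_orderOf_div (orderOf_pos g).ne' (orderOf_map_dvd f g)⟩

namespace ZMod

variable {p : ℕ}

theorem isUnit_or_isNilpotent_of_prime_pow (hp : p.Prime) (k : ℕ) (x : ZMod (p ^ k)) :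
    IsUnit x ∨ IsNilpotent x := by
  have : NeZero (p ^ k) := ⟨pow_ne_zero _ hp.ne_zero⟩
  refine or_iff_not_imp_left.mpr fun hx => ⟨k, ?_⟩
  have hdvd : p ∣ x.val := by
    by_contra h
    apply hx
    simpa using (isUnit_iff_coprime x.val (p ^ k)).mpr
      (((hp.coprime_iff_not_dvd).mpr h).symm.pow_right k)
  rw [← natCast_zmod_val x, ← Nat.cast_pow, natCast_eq_zero_iff]
  exact pow_dvd_pow_of_dvd hdvd k

theorem exists_orderOf_eq_prime_sub_one (hp : p.Prime) {k : ℕ} (hk : k ≠ 0) :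
    ∃ ω : ZMod (p ^ k), orderOf ω = p - 1 := by
  have : Fact p.Prime := ⟨hp⟩
  have : NeZero (p ^ k) := ⟨pow_ne_zero _ hp.ne_zero⟩
  obtain ⟨g, hg⟩ := IsCyclic.exists_ofOrder_eq_natCard (α := (ZMod p)ˣ)
  obtain ⟨u, hu⟩ := exists_orderOf_eq_of_surjective (unitsMap_surjective (dvd_pow_self p hk)) g
  refine ⟨u, ?_⟩
  rw [orderOf_units, hu, hg, Nat.card_eq_fintype_card, card_units]

end ZMod

theorem zmod_prime_pow_halidon_general (p k : ℕ) (hp : p.Prime) (hk : 1 ≤ k) :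
    IsHalidonRing (ZMod (p ^ k)) (p - 1) ∧
      ∀ ω : ZMod (p ^ k), IsUnit ω → orderOf ω = p ^ (k - 1) * (p - 1) →
        IsPrimitiveHalidonRoot (p - 1) (ω ^ (p ^ (k - 1))) := by
  have hR := ZMod.isUnit_or_isNilpotent_of_prime_pow hp k
  have hunit : IsUnit ((p - 1 : ℕ) : ZMod (p ^ k)) :=
    (ZMod.isUnit_iff_coprime _ _).mpr
      (((Nat.coprime_self_sub_right hp.one_le).mpr (Nat.coprime_one_right p)).symm.pow_right k)
  refine ⟨⟨hunit, ?_⟩, fun ω _ hω => isPrimitiveHalidonRoot_of_orderOf_eq hR hunit ?_⟩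
  · obtain ⟨ω, hω⟩ := ZMod.exists_orderOf_eq_prime_sub_one hp (Nat.one_le_iff_ne_zero.mp hk)
    exact ⟨ω, isPrimitiveHalidonRoot_of_orderOf_eq hR hunit hω⟩
  · rw [orderOf_pow_of_dvd (pow_ne_zero _ hp.ne_zero) (hω ▸ dvd_mul_right _ _), hω,
      Nat.mul_div_cancel_left _ (pow_pos hp.pos _)]

/-- For an odd prime `p` and `k ≥ 1`, the ring `ZMod (p ^ k)` is a halidon ring with
index `p - 1`; moreover, if `ω` is a unit of `ZMod (p ^ k)` of multiplicative order
`φ(p ^ k) = p ^ (k - 1) * (p - 1)`, then `ω ^ (p ^ (k - 1))` is a primitive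
`(p - 1)`-th root of unity in `ZMod (p ^ k)`. -/
theorem zmod_prime_pow_halidon (p k : ℕ) (hp : p.Prime) (hodd : Odd p) (hk : 1 ≤ k) :
    IsHalidonRing (ZMod (p ^ k)) (p - 1) ∧
      ∀ ω : ZMod (p ^ k), IsUnit ω → orderOf ω = p ^ (k - 1) * (p - 1) →
        IsPrimitiveHalidonRoot (p - 1) (ω ^ (p ^ (k - 1))) :=
  zmod_prime_pow_halidon_general p k hp hk
end

section
/- Let n = p_1^{e_1} p_2^{e_2} ⋯ p_k^{e_k} with 2 < p_1 < p_2 < ⋯ < p_k primes and e_i ≥ 1, and let m be a positive integer. Then an element ω ∈ ZMod(n) is a primitive m-th root of unity with m·1 invertible in ZMod(n) if and only if for each i = 1,…,k the image ω_i of ω under the natural ring homomorphism ZMod(n) → ZMod(p_i^{e_i}) is a primitive m-th root of unity in ZMod(p_i^{e_i}) with m·1 invertible in ZMod(p_i^{e_i}); in particular, ZMod(n) is a halidon ring with index m if and only if each ZMod(p_i^{e_i}) is a halidon ring with index m with primitive root ω mod p_i^{e_i}. -/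
private lemma halidon_cast_eq_zero_of_all (n : ℕ) (hn : 1 < n) (x : ZMod n)
    (h : ∀ p ∈ n.primeFactors,
      ZMod.castHom (Nat.ordProj_dvd n p) (ZMod (p ^ n.factorization p)) x = 0) :
    x = 0 := by
  haveI : NeZero n := ⟨by omega⟩
  have hx : ∀ p ∈ n.primeFactors, p ^ n.factorization p ∣ x.val := by
    intro p hp
    have hc := h p hp
    rw [ZMod.castHom_apply, ← ZMod.natCast_val, ZMod.natCast_eq_zero_iff] at hc
    exact hc
  have hdvd : n ∣ x.val := by
    rw [Nat.dvd_iff_prime_pow_dvd_dvd]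
    intro p k hp hpk
    rcases Nat.eq_zero_or_pos k with rfl | hk
    · simpa using one_dvd _
    have hpp : p.Prime := hp
    have hpn : p ∣ n := (dvd_pow_self p hk.ne').trans hpk
    have hpmem : p ∈ n.primeFactors :=
      Nat.mem_primeFactors.mpr ⟨hpp, hpn, by omega⟩
    have hk' : k ≤ n.factorization p :=
      (Nat.Prime.pow_dvd_iff_le_factorization hpp (by omega)).mp hpk
    exact (pow_dvd_pow p hk').trans (hx p hpmem)
  have : (x.val : ZMod n) = 0 := (ZMod.natCast_eq_zero_iff _ _).mpr hdvd
  rwa [ZMod.natCast_zmod_val] at this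

private lemma halidon_cast_eq_all_iff (n : ℕ) (hn : 1 < n) (x y : ZMod n) :
    x = y ↔ ∀ p ∈ n.primeFactors,
      ZMod.castHom (Nat.ordProj_dvd n p) (ZMod (p ^ n.factorization p)) x =
      ZMod.castHom (Nat.ordProj_dvd n p) (ZMod (p ^ n.factorization p)) y := by
  constructor
  · rintro rfl p hp; rfl
  · intro h
    have := halidon_cast_eq_zero_of_all n hn (x - y) (fun p hp => by
      rw [map_sub, h p hp, sub_self])
    linear_combination this

/-- For odd `n > 1` with prime factorization `n = p₁^{e₁} ⋯ p_k^{e_k}`, an element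
`ω ∈ ZMod n` is a primitive `m`-th root of unity with `m` invertible iff each image
`ω mod pᵢ^{eᵢ}` is a primitive `m`-th root of unity in `ZMod (pᵢ^{eᵢ})` with `m`
invertible there; in particular `ZMod n` is a halidon ring with index `m` iff each
`ZMod (pᵢ^{eᵢ})` is a halidon ring with index `m` with primitive root `ω mod pᵢ^{eᵢ}`. -/
theorem zmod_halidon_iff_prime_pow_factors (n m : ℕ) (hn : 1 < n) (hodd : Odd n)
    (hm : 0 < m) :
    (∀ ω : ZMod n,
      (IsPrimitiveHalidonRoot m ω ∧ IsUnit (m : ZMod n)) ↔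
        ∀ p ∈ n.primeFactors,
          IsPrimitiveHalidonRoot m
              (ZMod.castHom (Nat.ordProj_dvd n p) (ZMod (p ^ n.factorization p)) ω) ∧
            IsUnit (m : ZMod (p ^ n.factorization p))) ∧
    (IsHalidonRing (ZMod n) m ↔
      ∃ ω : ZMod n, ∀ p ∈ n.primeFactors,
        IsPrimitiveHalidonRoot m
            (ZMod.castHom (Nat.ordProj_dvd n p) (ZMod (p ^ n.factorization p)) ω) ∧
          IsUnit (m : ZMod (p ^ n.factorization p))) := by
  haveI : NeZero n := ⟨by omega⟩
  have hfac : ∀ p ∈ n.primeFactors, 1 < p ^ n.factorization p := by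
    intro p hp
    have hpp : p.Prime := Nat.prime_of_mem_primeFactors hp
    have he : n.factorization p ≠ 0 := by
      rw [← Finsupp.mem_support_iff, Nat.support_factorization]; exact hp
    exact Nat.one_lt_pow he hpp.one_lt
  have key : ∀ ω : ZMod n,
      (IsPrimitiveHalidonRoot m ω ∧ IsUnit (m : ZMod n)) ↔
        ∀ p ∈ n.primeFactors,
          IsPrimitiveHalidonRoot m
              (ZMod.castHom (Nat.ordProj_dvd n p) (ZMod (p ^ n.factorization p)) ω) ∧
            IsUnit (m : ZMod (p ^ n.factorization p)) := by
    intro ω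
    constructor
    · rintro ⟨⟨h1, h2, h3⟩, hu⟩ p hp
      set f := ZMod.castHom (Nat.ordProj_dvd n p) (ZMod (p ^ n.factorization p)) with hf
      haveI : Fact (1 < p ^ n.factorization p) := ⟨hfac p hp⟩
      have hsum : ∀ k : ℕ, 0 < k → k < m →
          ∑ r ∈ Finset.range m, (f ω) ^ (r * k) = 0 := by
        intro k hk hkm
        have := congrArg f (h3 k hk hkm)
        simpa [map_sum, map_pow] using this
      have hum : IsUnit (m : ZMod (p ^ n.factorization p)) := by
        have := hu.map f
        simpa using this
      refine ⟨⟨?_, ?_, hsum⟩, hum⟩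
      · rw [← map_pow, h1, map_one]
      · intro k hk hkm hcontra
        have hs := hsum k hk hkm
        have : ∑ r ∈ Finset.range m, (f ω) ^ (r * k) = (m : ZMod (p ^ n.factorization p)) := by
          calc ∑ r ∈ Finset.range m, (f ω) ^ (r * k)
              = ∑ r ∈ Finset.range m, ((f ω) ^ k) ^ r := by
                refine Finset.sum_congr rfl fun r _ => ?_
                rw [← pow_mul, mul_comm]
            _ = ∑ r ∈ Finset.range m, 1 := by rw [hcontra]; simp
            _ = (m : ZMod (p ^ n.factorization p)) := by simp
        rw [this] at hs
        exact hum.ne_zero hs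
    · intro H
      obtain ⟨p0, hp0⟩ : n.primeFactors.Nonempty := Nat.nonempty_primeFactors.mpr hn
      have h1 : ω ^ m = 1 := by
        rw [halidon_cast_eq_all_iff n hn]
        intro p hp
        rw [map_pow, (H p hp).1.1, map_one]
      have h2 : ∀ k : ℕ, 0 < k → k < m → ω ^ k ≠ 1 := by
        intro k hk hkm hcontra
        apply (H p0 hp0).1.2.1 k hk hkm
        rw [← map_pow, hcontra, map_one]
      have h3 : ∀ k : ℕ, 0 < k → k < m → ∑ r ∈ Finset.range m, ω ^ (r * k) = 0 := by
        intro k hk hkm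
        rw [halidon_cast_eq_all_iff n hn]
        intro p hp
        rw [map_sum, map_zero]
        simpa [map_pow] using (H p hp).1.2.2 k hk hkm
      have hu : IsUnit (m : ZMod n) := by
        rw [ZMod.isUnit_iff_coprime]
        by_contra hcop
        have hg1 : Nat.gcd m n ≠ 1 := hcop
        obtain ⟨q, hq, hqg⟩ := Nat.exists_prime_and_dvd hg1
        have hqm : q ∣ m := hqg.trans (Nat.gcd_dvd_left m n)
        have hqn : q ∣ n := hqg.trans (Nat.gcd_dvd_right m n)
        have hqmem : q ∈ n.primeFactors := Nat.mem_primeFactors.mpr ⟨hq, hqn, by omega⟩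
        have hcq : Nat.Coprime m (q ^ n.factorization q) :=
          (ZMod.isUnit_iff_coprime _ _).mp (H q hqmem).2
        have he : n.factorization q ≠ 0 := by
          rw [← Finsupp.mem_support_iff, Nat.support_factorization]; exact hqmem
        have : Nat.Coprime m q := hcq.coprime_dvd_right (dvd_pow_self q he)
        exact (hq.coprime_iff_not_dvd.mp this.symm) hqm
      exact ⟨⟨h1, h2, h3⟩, hu⟩
  refine ⟨key, ?_⟩
  constructor
  · rintro ⟨hu, ω, hω⟩
    exact ⟨ω, (key ω).mp ⟨hω, hu⟩⟩
  · rintro ⟨ω, h⟩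
    obtain ⟨hω, hu⟩ := (key ω).mpr h
    exact ⟨hu, ω, hω⟩
end

section
/- Let n > 1 be an odd integer. Then: (i) if ZMod(n) is a halidon ring with index m, then m divides p − 1 for every prime p dividing n, hence m divides gcd{p − 1 : p prime, p ∣ n}; and (ii) ZMod(n) is a halidon ring with index gcd{p − 1 : p prime, p ∣ n}. Consequently the maximal halidon index of ZMod(n) is ψ(n) = gcd{p − 1 : p prime, p ∣ n}. -/
/-- The halidon function: for odd `n`, the gcd of `p - 1` over the primes `p` dividing `n`. -/
def halidonPsi (n : ℕ) : ℕ := n.primeFactors.gcd (fun p => p - 1)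

/-! Reducing a primitive halidon root of `ZMod n` modulo a prime `p ∣ n` gives an element of
multiplicative order exactly `m`: a smaller order `k` would turn the vanishing sum `∑ ω ^ (r * k)`
into `m = 0` in `ZMod p`, although `m` is a unit. Hence `m ∣ p - 1`.

Conversely, for `m = ψ(n)` the Chinese remainder theorem glues local elements `ω` of `ZMod (p ^ e)`
with `ω ^ m = 1` whose reduction modulo `p` has order `m`. Then each `ω ^ k - 1` with `0 < k < m`
is nonzero modulo every prime factor of `n`, hence a unit, and this makes the geometric sums
`∑ (ω ^ k) ^ r` vanish. -/

namespace IsPrimitiveHalidonRoot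

variable {R : Type*} [CommRing R] {m : ℕ} {ω : R}

theorem of_isUnit_pow_sub_one [Nontrivial R] (hω : ω ^ m = 1)
    (hunit : ∀ k, 0 < k → k < m → IsUnit (ω ^ k - 1)) : IsPrimitiveHalidonRoot m ω := by
  refine ⟨hω, fun k hk hkm h1 => ?_, fun k hk hkm => ?_⟩
  · simpa [h1] using hunit k hk hkm
  · simp_rw [mul_comm _ k, pow_mul]
    refine (hunit k hk hkm).mul_left_eq_zero.mp ?_
    rw [geom_sum_mul, ← pow_mul, mul_comm, pow_mul, hω, one_pow, sub_self]

theorem orderOf_map {S : Type*} [CommRing S] [Nontrivial S] (hω : IsPrimitiveHalidonRoot m ω)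
    (hm : IsUnit (m : R)) (f : R →+* S) : orderOf (f ω) = m := by
  have hmS : IsUnit (m : S) := by simpa using hm.map f
  have hm0 : 0 < m := Nat.pos_of_ne_zero fun h => by simp [h] at hmS
  refine (orderOf_eq_iff hm0).mpr ⟨by rw [← map_pow, hω.1, map_one], fun k hkm hk h1 => ?_⟩
  have hsum := congrArg f (hω.2.2 k hk hkm)
  simp only [map_sum, map_zero, map_pow, mul_comm _ k, pow_mul, h1, one_pow,
    Finset.sum_const, Finset.card_range, nsmul_one] at hsum
  simp [hsum] at hmS

end IsPrimitiveHalidonRoot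

namespace ZMod

theorem isUnit_of_forall_castHom_ne_zero {n : ℕ} [NeZero n] {x : ZMod n}
    (h : ∀ p, p.Prime → ∀ hp : p ∣ n, castHom hp (ZMod p) x ≠ 0) : IsUnit x := by
  rw [← natCast_zmod_val x, isUnit_iff_coprime]
  by_contra hx
  obtain ⟨p, hp, hpx, hpn⟩ := Nat.Prime.not_coprime_iff_dvd.mp hx
  refine h p hp hpn ?_
  rw [← natCast_zmod_val x, map_natCast, natCast_eq_zero_iff]
  exact hpx

theorem exists_pow_eq_one_orderOf_castHom_eq {p e m : ℕ} [Fact p.Prime] (he : e ≠ 0)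
    (hm : m ∣ p - 1) : ∃ ω : ZMod (p ^ e), ω ^ m = 1 ∧
      orderOf (castHom (dvd_pow_self p he) (ZMod p) ω) = m := by
  have hp : p.Prime := Fact.out
  obtain ⟨g, hg⟩ := IsCyclic.exists_ofOrder_eq_natCard (α := (ZMod p)ˣ)
  rw [Nat.card_eq_fintype_card, card_units] at hg
  obtain ⟨G, rfl⟩ := unitsMap_surjective (dvd_pow_self p he) g
  obtain ⟨d, hd⟩ := hm
  have hd0 : d ≠ 0 := by rintro rfl; have := hp.two_le; omega
  have hcop : (p ^ (e - 1)).Coprime (p - 1) :=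
    ((Nat.coprime_self_sub_right hp.one_le).mpr p.coprime_one_right).pow_left _
  -- `m * (d * p ^ (e - 1)) = φ(p ^ e)`, and `p ^ (e - 1)` is prime to the order `p - 1` of `g`.
  refine ⟨↑(G ^ (d * p ^ (e - 1))), ?_, ?_⟩
  · rw [← Units.val_pow_eq_pow_val, ← pow_mul, mul_comm, ← mul_assoc, ← hd, mul_comm,
      ← Nat.totient_prime_pow hp (Nat.pos_of_ne_zero he), ← card_units_eq_totient,
      pow_card_eq_one, Units.val_one]
  · change orderOf (unitsMap (dvd_pow_self p he) (G ^ (d * p ^ (e - 1))) : ZMod p) = m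
    rw [orderOf_units, map_pow, orderOf_pow' _ (mul_ne_zero hd0 (pow_ne_zero _ hp.ne_zero)), hg,
      hcop.gcd_mul_right_cancel_right, hd, Nat.gcd_mul_left_left,
      Nat.mul_div_cancel _ (Nat.pos_of_ne_zero hd0)]

theorem exists_pow_eq_one_forall_orderOf_castHom_eq {n m : ℕ} (hn : n ≠ 0)
    (hm : ∀ p ∈ n.primeFactors, m ∣ p - 1) :
    ∃ ω : ZMod n, ω ^ m = 1 ∧
      ∀ p, p.Prime → ∀ hp : p ∣ n, orderOf (castHom hp (ZMod p) ω) = m := by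
  have he (p : n.primeFactors) : n.factorization p ≠ 0 :=
    Finsupp.mem_support_iff.mp (by rw [Nat.support_factorization]; exact p.2)
  have hloc (p : n.primeFactors) : ∃ w : ZMod (p ^ n.factorization p), w ^ m = 1 ∧
      orderOf (castHom (dvd_pow_self (p : ℕ) (he p)) (ZMod p) w) = m :=
    have : Fact (p : ℕ).Prime := ⟨Nat.prime_of_mem_primeFactors p.2⟩
    exists_pow_eq_one_orderOf_castHom_eq (he p) (hm p p.2)
  choose w hw hwo using hloc
  refine ⟨(equivPi n hn).symm w, ?_, fun p hp hpn => ?_⟩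
  · apply (equivPi n hn).injective
    rw [map_pow, RingEquiv.apply_symm_apply, map_one]
    exact funext hw
  · let q : n.primeFactors := ⟨p, Nat.mem_primeFactors.mpr ⟨hp, hpn, hn⟩⟩
    have hcomp : castHom hpn (ZMod p) = (castHom (dvd_pow_self p (he q)) (ZMod p)).comp
        ((Pi.evalRingHom _ q).comp (equivPi n hn).toRingHom) := Subsingleton.elim _ _
    rw [hcomp]
    simpa using hwo q

end ZMod

theorem dvd_halidonPsi_iff {m n : ℕ} : m ∣ halidonPsi n ↔ ∀ p ∈ n.primeFactors, m ∣ p - 1 :=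
  Finset.dvd_gcd_iff

theorem coprime_halidonPsi {n : ℕ} (hn : n ≠ 0) : (halidonPsi n).Coprime n := by
  by_contra h
  obtain ⟨p, hp, hpψ, hpn⟩ := Nat.Prime.not_coprime_iff_dvd.mp h
  have hp1 : p ∣ p - 1 := dvd_halidonPsi_iff.mp hpψ p (Nat.mem_primeFactors.mpr ⟨hp, hpn, hn⟩)
  exact (Nat.sub_lt hp.pos Nat.one_pos).not_ge (Nat.le_of_dvd (Nat.sub_pos_of_lt hp.one_lt) hp1)

theorem IsHalidonRing.dvd_prime_sub_one {n m p : ℕ} (h : IsHalidonRing (ZMod n) m) (hp : p.Prime)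
    (hpn : p ∣ n) : m ∣ p - 1 := by
  have : Fact p.Prime := ⟨hp⟩
  obtain ⟨hm, ω, hω⟩ := h
  have hord := hω.orderOf_map hm (ZMod.castHom hpn (ZMod p))
  refine hord ▸ ZMod.orderOf_dvd_card_sub_one fun h0 => ?_
  rw [h0, orderOf_zero] at hord
  subst hord
  simpa using hm.map (ZMod.castHom hpn (ZMod p))

theorem ZMod.isHalidonRing_halidonPsi {n : ℕ} (hn : 1 < n) :
    IsHalidonRing (ZMod n) (halidonPsi n) := by
  have : Fact (1 < n) := ⟨hn⟩
  have hn0 : n ≠ 0 := by omega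
  refine ⟨(isUnit_iff_coprime _ _).mpr (coprime_halidonPsi hn0), ?_⟩
  obtain ⟨ω, hω, hωo⟩ :=
    exists_pow_eq_one_forall_orderOf_castHom_eq hn0 (dvd_halidonPsi_iff.mp dvd_rfl)
  refine ⟨ω, .of_isUnit_pow_sub_one hω fun k hk hkm => isUnit_of_forall_castHom_ne_zero ?_⟩
  intro p hp hpn h0
  rw [map_sub, map_pow, map_one, sub_eq_zero] at h0
  exact pow_ne_one_of_lt_orderOf hk.ne' (hωo p hp hpn ▸ hkm) h0

theorem zmod_maximal_halidon_index_general (n : ℕ) (hn : 1 < n) :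
    (∀ m : ℕ, 0 < m → IsHalidonRing (ZMod n) m →
      (∀ p : ℕ, p.Prime → p ∣ n → m ∣ p - 1) ∧ m ∣ halidonPsi n) ∧
    IsHalidonRing (ZMod n) (halidonPsi n) :=
  ⟨fun _ _ h => ⟨fun _ hp hpn => h.dvd_prime_sub_one hp hpn, dvd_halidonPsi_iff.mpr fun _ hp =>
      h.dvd_prime_sub_one (Nat.prime_of_mem_primeFactors hp) (Nat.dvd_of_mem_primeFactors hp)⟩,
    ZMod.isHalidonRing_halidonPsi hn⟩

/-- For odd `n > 1`: (i) any halidon index `m` of `ZMod n` divides `p - 1` for every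
prime `p ∣ n`, hence divides `ψ(n) = gcd {p - 1 : p prime, p ∣ n}`; and
(ii) `ZMod n` is a halidon ring with index `ψ(n)`.  Thus `ψ(n)` is the maximal
halidon index of `ZMod n`. -/
theorem zmod_maximal_halidon_index (n : ℕ) (hn : 1 < n) (hodd : Odd n) :
    (∀ m : ℕ, 0 < m → IsHalidonRing (ZMod n) m →
      (∀ p : ℕ, p.Prime → p ∣ n → m ∣ p - 1) ∧ m ∣ halidonPsi n) ∧
    IsHalidonRing (ZMod n) (halidonPsi n) :=
  zmod_maximal_halidon_index_general n hn
end

section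
/- Let n be an even positive integer. If ZMod(n) is a halidon ring with index m, then m = 1; that is, ZMod(n) is only a trivial halidon ring. -/
/-- If `n` is an even positive integer and `ZMod n` is a halidon ring with index `m`,
then `m = 1`: `ZMod n` is only a trivial halidon ring. -/
theorem zmod_even_halidon_trivial (n : ℕ) (hn : 0 < n) (heven : Even n)
    (m : ℕ) (h : IsHalidonRing (ZMod n) m) : m = 1 := by
  obtain ⟨hu, ω, hω1, hω2, hω3⟩ := h
  have hn2 : 2 ≤ n := by
    rcases heven with ⟨k, rfl⟩; omega
  haveI : NeZero n := ⟨by omega⟩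
  haveI : Fact (1 < n) := ⟨by omega⟩
  have hm0 : m ≠ 0 := by
    rintro rfl
    simp only [Nat.cast_zero, isUnit_zero_iff] at hu
    exact zero_ne_one hu
  by_contra hm
  have hm1 : 1 < m := lt_of_le_of_ne (Nat.one_le_iff_ne_zero.mpr hm0) (Ne.symm hm)
  have h2n : (2 : ℕ) ∣ n := heven.two_dvd
  set f := ZMod.castHom h2n (ZMod 2) with hf
  have hωm : (f ω) ^ m = 1 := by rw [← map_pow, hω1, map_one]
  have hfω : f ω = 1 := by
    have hcases : ∀ x : ZMod 2, x = 0 ∨ x = 1 := by decide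
    rcases hcases (f ω) with h0 | h1
    · rw [h0, zero_pow hm0] at hωm
      exact absurd hωm zero_ne_one
    · exact h1
  have hsum := congrArg f (hω3 1 one_pos hm1)
  rw [map_sum, map_zero] at hsum
  have hsum' : (m : ZMod 2) = 0 := by
    have : ∀ r ∈ Finset.range m, f (ω ^ (r * 1)) = 1 := by
      intro r _
      rw [map_pow, hfω, one_pow]
    rw [Finset.sum_congr rfl this, Finset.sum_const, Finset.card_range,
      nsmul_eq_mul, mul_one] at hsum
    exact hsum
  have h2m : (2 : ℕ) ∣ m := (ZMod.natCast_eq_zero_iff m 2).mp hsum'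
  have hcop : Nat.Coprime m n := (ZMod.isUnit_iff_coprime m n).mp hu
  have : (2 : ℕ) ∣ Nat.gcd m n := Nat.dvd_gcd h2m h2n
  rw [hcop] at this
  omega
end

section
/- Let n = p_1^{e_1} p_2^{e_2} ⋯ p_k^{e_k} where p_1 < p_2 < ⋯ < p_k are odd primes, e_i ≥ 1, and let m be a positive integer such that p_i = m·t_i + 1 for each i, where the integers t_1,…,t_k have greatest common divisor 1 (so that m is the maximal halidon index of ZMod(n)). Then the number of primitive m-th roots of unity in ZMod(n) is φ(m)^k, where φ is Euler's totient function. -/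
/-!
By the Chinese remainder theorem `ZMod n ≅ ∏ ZMod (pᵢ ^ eᵢ)`, and since `m` is invertible in
every factor, `ω` is a primitive `m`-th root of unity iff each component is. Each factor is a
local ring, and there the vanishing of the power sums is automatic for an element of
multiplicative order `m`: if `u ^ m = 1` with `u ≠ 1`, then `u - 1` is a unit, because
otherwise `∑ uʳ ≡ m` would be a unit annihilated by `u - 1`. So in `ZMod (pᵢ ^ eᵢ)` we count
the elements of order `m`; they are units, and the unit group is cyclic of order
`pᵢ ^ (eᵢ - 1) (pᵢ - 1)`, a multiple of `m`, so there are `φ(m)` of them.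
-/

open Finset

section HalidonRoot

variable {R S : Type*} [CommRing R] [CommRing S] {m : ℕ}

theorem isPrimitiveHalidonRoot_map_iff {f : R →+* S} (hf : Function.Injective f) {ω : R} :
    IsPrimitiveHalidonRoot m (f ω) ↔ IsPrimitiveHalidonRoot m ω := by
  simp only [IsPrimitiveHalidonRoot, ← map_pow, ← map_sum, ne_eq, map_eq_one_iff f hf,
    map_eq_zero_iff f hf]

theorem sum_range_pow_mul_eq_natCast {ω : R} {k : ℕ} (hk : ω ^ k = 1) :
    ∑ r ∈ range m, ω ^ (r * k) = m := by
  simp [pow_mul', hk]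

theorem isPrimitiveHalidonRoot_pi_iff {ι : Type*} [Nonempty ι] {A : ι → Type*}
    [∀ i, CommRing (A i)] (hm : ∀ i, (m : A i) ≠ 0) {ω : ∀ i, A i} :
    IsPrimitiveHalidonRoot m ω ↔ ∀ i, IsPrimitiveHalidonRoot m (ω i) := by
  constructor
  · rintro ⟨hpow, -, hsum⟩ i
    have hsum_i (k : ℕ) (hk : 0 < k) (hkm : k < m) : ∑ r ∈ range m, ω i ^ (r * k) = 0 := by
      simpa using congrFun (hsum k hk hkm) i
    refine ⟨congrFun hpow i, fun k hk hkm hone => hm i ?_, hsum_i⟩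
    rw [← sum_range_pow_mul_eq_natCast hone, hsum_i k hk hkm]
  · intro h
    obtain ⟨i⟩ := ‹Nonempty ι›
    refine ⟨funext fun j => (h j).1, fun k hk hkm hone => (h i).2.1 k hk hkm ?_,
      fun k hk hkm => funext fun j => ?_⟩
    · exact congrFun hone i
    · simpa using (h j).2.2 k hk hkm

theorem isUnit_sub_one_of_pow_eq_one [IsLocalRing R] (hm : IsUnit (m : R)) {u : R}
    (hu : u ^ m = 1) (hne : u ≠ 1) : IsUnit (u - 1) := by
  have hann : (∑ r ∈ range m, u ^ r) * (u - 1) = 0 := by rw [geom_sum_mul, hu, sub_self]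
  obtain ⟨T, hT⟩ : u - 1 ∣ ∑ r ∈ range m, u ^ r - m := by
    have : ∑ r ∈ range m, u ^ r - m = ∑ r ∈ range m, (u ^ r - 1 ^ r) := by
      simp [sum_sub_distrib]
    exact this ▸ dvd_sum fun r _ => sub_dvd_pow_sub_pow u 1 r
  have : IsUnit ((∑ r ∈ range m, u ^ r) + -((u - 1) * T)) := by
    rwa [← hT, neg_sub, add_sub_cancel]
  rcases IsLocalRing.isUnit_or_isUnit_of_isUnit_add this with hsum | hmul
  · exact absurd (sub_eq_zero.mp (hsum.mul_right_eq_zero.mp hann)) hne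
  · exact isUnit_of_mul_isUnit_left (IsUnit.neg_iff _ |>.mp hmul)

theorem isPrimitiveHalidonRoot_iff_orderOf_eq [IsLocalRing R] (hm0 : 0 < m)
    (hm : IsUnit (m : R)) {ω : R} : IsPrimitiveHalidonRoot m ω ↔ orderOf ω = m := by
  rw [orderOf_eq_iff hm0]
  refine ⟨fun h => ⟨h.1, fun k hkm hk => h.2.1 k hk hkm⟩,
    fun ⟨hpow, hord⟩ => ⟨hpow, fun k hk hkm => hord k hkm hk, fun k hk hkm => ?_⟩⟩
  have hu : (ω ^ k) ^ m = 1 := by rw [← pow_mul, mul_comm, pow_mul, hpow, one_pow]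
  have hunit := isUnit_sub_one_of_pow_eq_one hm hu (hord k hkm hk)
  simp_rw [mul_comm _ k, pow_mul]
  exact hunit.mul_left_eq_zero.mp (by rw [geom_sum_mul, hu, sub_self])

end HalidonRoot

theorem card_units_orderOf_eq_card_orderOf {M : Type*} [Monoid M] {m : ℕ} (hm : 0 < m) :
    Nat.card {u : Mˣ // orderOf u = m} = Nat.card {x : M // orderOf x = m} := by
  refine Nat.card_congr (Equiv.ofBijective (fun u => ⟨u.1, orderOf_units.trans u.2⟩)
    ⟨fun u v h => Subtype.ext (Units.ext (congrArg Subtype.val h)), ?_⟩)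
  rintro ⟨x, hx⟩
  have hfin : IsOfFinOrder x := orderOf_pos_iff.mp (hx ▸ hm)
  exact ⟨⟨hfin.unit, orderOf_units.symm.trans hx⟩, rfl⟩

namespace ZMod

variable {p e m : ℕ}

theorem isLocalRing_prime_pow (hp : p.Prime) (he : e ≠ 0) : IsLocalRing (ZMod (p ^ e)) :=
  have : Fact p.Prime := ⟨hp⟩
  have : Nontrivial (ZMod (p ^ e)) := nontrivial_iff.mpr (Nat.pow_eq_one.not.mpr (by
    simp [hp.ne_one, he]))
  IsLocalRing.of_surjective' (PadicInt.toZModPow e) (ringHom_surjective _)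

theorem isUnit_natCast_prime_pow_of_dvd_sub_one (hp : p.Prime) (hm0 : 0 < m) (hm : m ∣ p - 1) :
    IsUnit (m : ZMod (p ^ e)) := by
  have hmp : m < p := by have := Nat.le_of_dvd (by have := hp.two_le; omega) hm; omega
  have hpm : ¬ p ∣ m := fun h => (Nat.le_of_dvd hm0 h).not_gt hmp
  exact (isUnit_iff_coprime m _).mpr
    (Nat.Coprime.pow_right _ (Nat.coprime_comm.mp (hp.coprime_iff_not_dvd.mpr hpm)))

theorem card_units_orderOf_eq_totient (hp : p.Prime) (hodd : Odd p) (he : e ≠ 0)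
    (hm : m ∣ p - 1) : Nat.card {u : (ZMod (p ^ e))ˣ // orderOf u = m} = m.totient := by
  have : NeZero (p ^ e) := ⟨pow_ne_zero e hp.ne_zero⟩
  have : IsCyclic (ZMod (p ^ e))ˣ :=
    isCyclic_units_of_prime_pow p hp (fun h => absurd (h ▸ hodd) (by decide)) e
  rw [Nat.card_eq_fintype_card, Fintype.card_subtype]
  refine IsCyclic.card_orderOf_eq_totient ?_
  rw [card_units_eq_totient, Nat.totient_prime_pow hp (Nat.pos_of_ne_zero he)]
  exact hm.mul_left _

theorem card_primitiveHalidonRoot_prime_pow (hp : p.Prime) (hodd : Odd p) (he : e ≠ 0)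
    (hm0 : 0 < m) (hm : m ∣ p - 1) :
    Nat.card {ω : ZMod (p ^ e) // IsPrimitiveHalidonRoot m ω} = m.totient := by
  have := isLocalRing_prime_pow hp he
  simp_rw [isPrimitiveHalidonRoot_iff_orderOf_eq hm0
    (isUnit_natCast_prime_pow_of_dvd_sub_one hp hm0 hm)]
  rw [← card_units_orderOf_eq_card_orderOf hm0, card_units_orderOf_eq_totient hp hodd he hm]

end ZMod

/-- Let `n = p₁^{e₁} ⋯ p_k^{e_k}` with `p₁ < ⋯ < p_k` odd primes, `eᵢ ≥ 1`, and let
`m > 0` satisfy `pᵢ = m * tᵢ + 1` where `gcd(t₁, …, t_k) = 1`.  Then the number of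
primitive `m`-th roots of unity in `ZMod n` is `φ(m) ^ k`. -/
theorem card_primitive_roots_zmod (k m n : ℕ) (p t e : Fin k → ℕ)
    (hp : ∀ i, (p i).Prime) (hodd : ∀ i, Odd (p i)) (hmono : StrictMono p)
    (he : ∀ i, 1 ≤ e i) (hpt : ∀ i, p i = m * t i + 1)
    (hgcd : Finset.univ.gcd t = 1) (hm : 0 < m)
    (hn : n = ∏ i, p i ^ e i) :
    Nat.card {ω : ZMod n // IsPrimitiveHalidonRoot m ω} = Nat.totient m ^ k := by
  subst hn
  -- The gcd over the empty index set is `0`.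
  have : Nonempty (Fin k) := Fin.pos_iff_nonempty.mp (Nat.pos_of_ne_zero fun hk => by
    subst hk; simp at hgcd)
  have he' (i : Fin k) : e i ≠ 0 := by have := he i; omega
  have hdvd (i : Fin k) : m ∣ p i - 1 := ⟨t i, by rw [hpt i, Nat.add_sub_cancel]⟩
  have hcop : Pairwise fun i j => (p i ^ e i).Coprime (p j ^ e j) := fun i j hij =>
    Nat.Coprime.pow _ _ ((Nat.coprime_primes (hp i) (hp j)).mpr (hmono.injective.ne hij))
  let crt := ZMod.prodEquivPi (fun i => p i ^ e i) hcop
  have hroot (ω : ZMod (∏ i, p i ^ e i)) :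
      IsPrimitiveHalidonRoot m ω ↔ ∀ i, IsPrimitiveHalidonRoot m (crt ω i) := by
    rw [← isPrimitiveHalidonRoot_map_iff (f := crt.toRingHom) crt.injective]
    exact isPrimitiveHalidonRoot_pi_iff fun i =>
      have := ZMod.isLocalRing_prime_pow (hp i) (he' i)
      (ZMod.isUnit_natCast_prime_pow_of_dvd_sub_one (hp i) hm (hdvd i)).ne_zero
  rw [Nat.card_congr ((crt.toEquiv.subtypeEquiv hroot).trans Equiv.subtypePiEquivPi),
    Nat.card_pi]
  simp [ZMod.card_primitiveHalidonRoot_prime_pow (hp _) (hodd _) (he' _) hm (hdvd _)]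
end

section
/- Let R be a commutative halidon ring with index m and primitive m-th root of unity ω, let G be a cyclic group of order m with generator g, and let u = ∑_{j=0}^{m−1} a_j g^j be an element of the group ring RG with associated elements λ_r = ∑_{j=0}^{m−1} a_j ω^{j·r} for r = 0,…,m−1. Suppose each λ_r is a unit of R, with inverse λ_r^{−1}. Define v = ∑_{i=0}^{m−1} b_i g^i where b_i = m^{−1} · ∑_{r=0}^{m−1} λ_r^{−1} · (ω^{m−1})^{i·r}. Then u·v = 1 in RG; that is, u is a unit of RG and v is its multiplicative inverse. -/
/-! Writing `ζ = ω ^ (m - 1) = ω⁻¹`, each `e_r = ∑_i ζ ^ (r i) g ^ i` is an eigenvector of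
left multiplication by `g` with eigenvalue `ω ^ r` (multiplying by `g` cyclically shifts the sum,
since `g ^ m = 1` and `ζ ^ m = 1`), hence `u e_r = λ_r e_r`. So
`u v = m⁻¹ ∑_r λ_r⁻¹ u e_r = m⁻¹ ∑_r e_r`, and orthogonality of the powers of `ω` gives
`∑_r e_r = m · 1`. -/

open Finset MonoidAlgebra

theorem Finset.sum_range_shift_eq_of_eq {M : Type*} [AddCommMonoid M] {f : ℕ → M} {m : ℕ}
    (h : f m = f 0) : ∑ i ∈ range m, f (i + 1) = ∑ i ∈ range m, f i := by
  cases m with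
  | zero => simp
  | succ n => rw [sum_range_succ, h, ← sum_range_succ']

theorem MonoidAlgebra.single_finsetSum {R M ι : Type*} [Semiring R] (s : Finset ι) (f : ι → R)
    (x : M) : single x (∑ i ∈ s, f i) = ∑ i ∈ s, single x (f i) :=
  map_sum (singleAddHom x) f s

section Eigenvector

variable {R G : Type*} [CommSemiring R] [Monoid G] {m : ℕ} {g : G} {ζ ω : R}

theorem single_mul_sum_single_pow (hg : g ^ m = 1) (hζ : ζ ^ m = 1) (hωζ : ω * ζ = 1) :
    single g 1 * ∑ i ∈ range m, single (g ^ i) (ζ ^ i) =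
      ω • ∑ i ∈ range m, single (g ^ i) (ζ ^ i) := by
  rw [mul_sum, smul_sum,
    ← sum_range_shift_eq_of_eq (f := fun i ↦ ω • single (g ^ i) (ζ ^ i)) (by simp [hg, hζ])]
  refine sum_congr rfl fun i _ ↦ ?_
  rw [single_mul_single, smul_single', pow_succ', pow_succ', ← mul_assoc, hωζ, one_mul]

theorem single_pow_mul_sum_single_pow (hg : g ^ m = 1) (hζ : ζ ^ m = 1) (hωζ : ω * ζ = 1)
    (j : ℕ) :
    single g 1 ^ j * ∑ i ∈ range m, single (g ^ i) (ζ ^ i) =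
      ω ^ j • ∑ i ∈ range m, single (g ^ i) (ζ ^ i) := by
  induction j with
  | zero => rw [pow_zero, pow_zero, one_mul, one_smul]
  | succ j ih =>
    rw [pow_succ', mul_assoc, ih, mul_smul_comm, single_mul_sum_single_pow hg hζ hωζ, smul_smul,
      pow_succ]

theorem sum_single_pow_mul_sum_single_pow (hg : g ^ m = 1) (hζ : ζ ^ m = 1) (hωζ : ω * ζ = 1)
    (a : ℕ → R) (n : ℕ) :
    (∑ j ∈ range n, single (g ^ j) (a j)) * ∑ i ∈ range m, single (g ^ i) (ζ ^ i) =
      (∑ j ∈ range n, a j * ω ^ j) • ∑ i ∈ range m, single (g ^ i) (ζ ^ i) := by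
  rw [sum_mul, sum_smul]
  refine sum_congr rfl fun j _ ↦ ?_
  rw [← mul_one (a j), ← smul_single', ← one_pow j, ← single_pow, smul_mul_assoc,
    single_pow_mul_sum_single_pow hg hζ hωζ, smul_smul, one_pow, mul_one]

end Eigenvector

theorem IsPrimitiveHalidonRoot.sum_range_pow_pow_sub_one_pow {R : Type*} [CommRing R] {m : ℕ}
    {ω : R} (hω : IsPrimitiveHalidonRoot m ω) (hm : 0 < m) {i : ℕ} (hi : i < m) :
    ∑ r ∈ range m, ((ω ^ (m - 1)) ^ r) ^ i = if i = 0 then (m : R) else 0 := by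
  split_ifs with hi0
  · simp [hi0]
  have hinv : (ω ^ (m - 1)) ^ i = ω ^ (m - i) :=
    calc (ω ^ (m - 1)) ^ i = (ω ^ (m - 1)) ^ i * ω ^ m := by rw [hω.1, mul_one]
      _ = ((ω ^ (m - 1)) ^ i * ω ^ i) * ω ^ (m - i) := by
        rw [mul_assoc, ← pow_add, Nat.add_sub_cancel' hi.le]
      _ = ω ^ (m - i) := by
        rw [← mul_pow, mul_comm (ω ^ (m - 1)), mul_pow_sub_one hm.ne', hω.1, one_pow, one_mul]
  calc ∑ r ∈ range m, ((ω ^ (m - 1)) ^ r) ^ i = ∑ r ∈ range m, ω ^ (r * (m - i)) :=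
        sum_congr rfl fun r _ ↦ by rw [pow_right_comm, hinv, ← pow_mul, mul_comm]
    _ = 0 := hω.2.2 _ (by omega) (by omega)

theorem IsPrimitiveHalidonRoot.sum_range_sum_single_pow_pow_sub_one_pow {R G : Type*} [CommRing R]
    [Monoid G] {m : ℕ} {ω : R} (hω : IsPrimitiveHalidonRoot m ω) (hm : 0 < m) (g : G) :
    ∑ r ∈ range m, ∑ i ∈ range m, single (g ^ i) (((ω ^ (m - 1)) ^ r) ^ i) = single 1 (m : R) := by
  rw [sum_comm]
  calc ∑ i ∈ range m, ∑ r ∈ range m, single (g ^ i) (((ω ^ (m - 1)) ^ r) ^ i)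
      = ∑ i ∈ range m, single (g ^ i) (if i = 0 then (m : R) else 0) :=
        sum_congr rfl fun i hi ↦ by
          rw [← single_finsetSum, hω.sum_range_pow_pow_sub_one_pow hm (mem_range.1 hi)]
    _ = single 1 (m : R) := by
        rw [sum_eq_single_of_mem 0 (mem_range.2 hm) fun i _ hi ↦ by rw [if_neg hi, single_zero]]
        simp

theorem groupRing_unit_inverse_general {R G : Type*} [CommRing R] [Group G] [Fintype G]
    (m : ℕ) (hm : 0 < m) (ω : R) (hω : IsPrimitiveHalidonRoot m ω)
    (minv : R) (hminv : (m : R) * minv = 1)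
    (g : G) (hcard : Fintype.card G = m)
    (a : ℕ → R) (lamInv : ℕ → R)
    (hlam : ∀ r < m, (∑ j ∈ Finset.range m, a j * ω ^ (j * r)) * lamInv r = 1) :
    (∑ j ∈ Finset.range m, MonoidAlgebra.single (g ^ j) (a j)) *
      (∑ i ∈ Finset.range m, MonoidAlgebra.single (g ^ i)
        (minv * ∑ r ∈ Finset.range m, lamInv r * (ω ^ (m - 1)) ^ (i * r))) =
      (1 : MonoidAlgebra R G) := by
  set ζ := ω ^ (m - 1)
  set E : ℕ → MonoidAlgebra R G := fun r ↦ ∑ i ∈ range m, single (g ^ i) ((ζ ^ r) ^ i)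
  have hg : g ^ m = 1 := hcard ▸ pow_card_eq_one
  have hζ : ζ ^ m = 1 := by rw [pow_right_comm, hω.1, one_pow]
  have hωζ : ω * ζ = 1 := by rw [mul_pow_sub_one hm.ne', hω.1]
  have hv : ∑ i ∈ range m, single (g ^ i) (minv * ∑ r ∈ range m, lamInv r * ζ ^ (i * r)) =
      minv • ∑ r ∈ range m, lamInv r • E r := by
    simp only [E, smul_sum, smul_single']
    rw [sum_comm]
    refine sum_congr rfl fun i _ ↦ ?_
    simp only [mul_sum, ← single_finsetSum, pow_right_comm ζ, ← pow_mul]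
  have hE : ∀ r < m, lamInv r • ((∑ j ∈ range m, single (g ^ j) (a j)) * E r) = E r := by
    intro r hr
    have hωζr : ω ^ r * ζ ^ r = 1 := by rw [← mul_pow, hωζ, one_pow]
    have heig : ∑ j ∈ range m, a j * (ω ^ r) ^ j = ∑ j ∈ range m, a j * ω ^ (j * r) :=
      sum_congr rfl fun j _ ↦ by rw [← pow_mul, mul_comm r]
    rw [sum_single_pow_mul_sum_single_pow hg (by rw [pow_right_comm, hζ, one_pow]) hωζr, smul_smul,
      heig, mul_comm, hlam r hr, one_smul]
  calc _ = minv • ∑ r ∈ range m, lamInv r • ((∑ j ∈ range m, single (g ^ j) (a j)) * E r) := by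
        rw [hv, mul_smul_comm, mul_sum]
        simp_rw [mul_smul_comm]
    _ = 1 := by
      rw [sum_congr rfl fun r hr ↦ hE r (mem_range.1 hr),
        hω.sum_range_sum_single_pow_pow_sub_one_pow hm g, smul_single', mul_comm, hminv, one_def]

/-- Let `R` be a commutative halidon ring with index `m`, primitive `m`-th root of unity
`ω` and inverse `minv` of `m·1`.  Let `G = ⟨g⟩` be cyclic of order `m` and let
`u = ∑_j a_j g^j ∈ RG` with associated elements `λ_r = ∑_j a_j ω^{j r}`, each a unit of
`R` with inverse `lamInv r`.  Then `v = ∑_i b_i g^i` with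
`b_i = m⁻¹ ∑_r λ_r⁻¹ (ω^{m-1})^{i r}` satisfies `u * v = 1`, so `u` is a unit of `RG`
with inverse `v`. -/
theorem groupRing_unit_inverse {R G : Type*} [CommRing R] [Group G] [Fintype G]
    (m : ℕ) (hm : 0 < m) (ω : R) (hω : IsPrimitiveHalidonRoot m ω)
    (minv : R) (hminv : (m : R) * minv = 1)
    (g : G) (hg : ∀ x : G, x ∈ Subgroup.zpowers g) (hcard : Fintype.card G = m)
    (a : ℕ → R) (lamInv : ℕ → R)
    (hlam : ∀ r < m, (∑ j ∈ Finset.range m, a j * ω ^ (j * r)) * lamInv r = 1) :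
    (∑ j ∈ Finset.range m, MonoidAlgebra.single (g ^ j) (a j)) *
      (∑ i ∈ Finset.range m, MonoidAlgebra.single (g ^ i)
        (minv * ∑ r ∈ Finset.range m, lamInv r * (ω ^ (m - 1)) ^ (i * r))) =
      (1 : MonoidAlgebra R G) :=
  groupRing_unit_inverse_general m hm ω hω minv hminv g hcard a lamInv hlam
end

section
/- Let R be a commutative halidon ring with index m and primitive m-th root of unity ω, let G be a cyclic group of order m with generator g, and let u = ∑_{j=0}^{m−1} a_j g^j be an element of the group ring RG with associated elements λ_r = ∑_{j=0}^{m−1} a_j ω^{j·r} for r = 0,…,m−1. Then u is a unit of the group ring RG if and only if every λ_r is a unit of R. -/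
open Finset MonoidAlgebra

theorem IsPrimitiveHalidonRoot.sum_pow_mul_eq_ite {R : Type*} [CommRing R] {m : ℕ} {ω : R}
    (hω : IsPrimitiveHalidonRoot m ω) (k : ℕ) :
    ∑ j ∈ range m, ω ^ (j * k) = if m ∣ k then (m : R) else 0 := by
  have hmod : ∀ j, ω ^ (j * k) = ω ^ (j * (k % m)) := fun j => by
    conv_lhs => rw [← Nat.mod_add_div k m]
    rw [mul_add, pow_add, mul_left_comm, pow_mul ω m, hω.1, one_pow, mul_one]
  simp_rw [hmod]
  split_ifs with hk
  · simp [Nat.mod_eq_zero_of_dvd hk]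
  · rcases Nat.eq_zero_or_pos m with rfl | hm
    · simp
    · exact hω.2.2 _ (Nat.pos_of_ne_zero fun h => hk (Nat.dvd_of_mod_eq_zero h)) (Nat.mod_lt k hm)

theorem Nat.dvd_sub_add_iff_eq {m r s : ℕ} (hr : r < m) (hs : s < m) :
    m ∣ m - r + s ↔ r = s := by
  constructor
  · rintro ⟨_ | _ | c, hc⟩
    · omega
    · omega
    · have : m * 2 ≤ m * (c + 1 + 1) := Nat.mul_le_mul_left _ (by omega)
      omega
  · rintro rfl
    rw [Nat.sub_add_cancel hr.le]

section
variable {R G : Type*} [CommRing R] [Group G] [Finite G] {g : G}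
  (hg : ∀ x, x ∈ Subgroup.zpowers g)

noncomputable def evalAtGen (ω : R) (hω : ω ^ orderOf g = 1) : MonoidAlgebra R G →ₐ[R] R :=
  let ζ := (IsUnit.of_pow_eq_one hω (orderOf_pos g).ne').unit
  lift R R G <| (Units.coeHom R).comp <| monoidHomOfForallMemZpowers hg (g' := ζ) <|
    orderOf_dvd_of_pow_eq_one (Units.ext (by simpa [ζ] using hω))

theorem evalAtGen_single_pow (ω : R) (hω : ω ^ orderOf g = 1) (j : ℕ) (c : R) :
    evalAtGen hg ω hω (single (g ^ j) c) = c * ω ^ j := by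
  simp [evalAtGen, lift_single]

variable {m : ℕ} (hgm : orderOf g = m)

noncomputable def dft (ω : R) (hω : ω ^ m = 1) : MonoidAlgebra R G →ₐ[R] (Fin m → R) :=
  AlgHom.pi fun r => evalAtGen hg (ω ^ (r : ℕ)) <| by
    rw [hgm, ← pow_mul, mul_comm, pow_mul, hω, one_pow]

theorem dft_apply_sum (ω : R) (hω : ω ^ m = 1) (a : ℕ → R) (r : Fin m) :
    dft hg hgm ω hω (∑ j ∈ range m, single (g ^ j) (a j)) r =
      ∑ j ∈ range m, a j * ω ^ (j * r) := by
  simp only [dft, AlgHom.pi_apply, map_sum, evalAtGen_single_pow, ← pow_mul, mul_comm (r : ℕ)]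

theorem dft_surjective {ω : R} (hω : IsPrimitiveHalidonRoot m ω) (hm : IsUnit (m : R)) :
    Function.Surjective (dft hg hgm ω hω.1) := by
  obtain ⟨n, hn⟩ := hm.exists_left_inv
  set e : Fin m → MonoidAlgebra R G :=
    fun r => ∑ j ∈ range m, single (g ^ j) (n * ω ^ (j * (m - r)))
  have he : ∀ r, dft hg hgm ω hω.1 (e r) = Pi.single r 1 := by
    intro r
    funext s
    rw [dft_apply_sum]
    calc ∑ j ∈ range m, n * ω ^ (j * (m - r)) * ω ^ (j * s)
        = n * ∑ j ∈ range m, ω ^ (j * (m - r + s)) := by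
          simp_rw [mul_add, pow_add, mul_sum, mul_assoc]
      _ = Pi.single (M := fun _ => R) r 1 s := by
          simp only [hω.sum_pow_mul_eq_ite, Nat.dvd_sub_add_iff_eq r.2 s.2, Fin.val_inj,
            Pi.single_apply, eq_comm (a := s)]
          split_ifs <;> simp [hn]
  intro c
  refine ⟨∑ r, c r • e r, ?_⟩
  ext s
  simp [he, Pi.single_apply]

theorem dft_bijective {ω : R} (hω : IsPrimitiveHalidonRoot m ω) (hm : IsUnit (m : R)) :
    Function.Bijective (dft hg hgm ω hω.1) := by
  have hcard : Nat.card G = m := by rw [← hgm, orderOf_eq_card_of_forall_mem_zpowers hg]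
  let coords : MonoidAlgebra R G ≃ₗ[R] (Fin m → R) := (coeffLinearEquiv R).trans <|
    (Finsupp.linearEquivFunOnFinite R R G).trans <|
      LinearEquiv.funCongrLeft R R (Finite.equivFinOfCardEq hcard).symm
  exact OrzechProperty.bijective_of_surjective_of_injective coords.toLinearMap
    (dft hg hgm ω hω.1).toLinearMap coords.injective (dft_surjective hg hgm hω hm)

theorem isUnit_iff_forall_isUnit_dft {ω : R} (hω : IsPrimitiveHalidonRoot m ω)
    (hm : IsUnit (m : R)) (x : MonoidAlgebra R G) :
    IsUnit x ↔ ∀ r, IsUnit (dft hg hgm ω hω.1 x r) := by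
  rw [← Pi.isUnit_iff, ← isUnit_map_iff (AlgEquiv.ofBijective _ (dft_bijective hg hgm hω hm))]
  rfl

end

theorem groupRing_isUnit_iff_general {R G : Type*} [CommRing R] [Group G] [Fintype G]
    (m : ℕ) (ω : R) (hω : IsPrimitiveHalidonRoot m ω)
    (hmu : IsUnit (m : R))
    (g : G) (hg : ∀ x : G, x ∈ Subgroup.zpowers g) (hcard : Fintype.card G = m)
    (a : ℕ → R) :
    IsUnit (∑ j ∈ Finset.range m, MonoidAlgebra.single (g ^ j) (a j)) ↔
      ∀ r < m, IsUnit (∑ j ∈ Finset.range m, a j * ω ^ (j * r)) := by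
  have hgm : orderOf g = m := by
    rw [orderOf_eq_card_of_forall_mem_zpowers hg, Nat.card_eq_fintype_card, hcard]
  rw [isUnit_iff_forall_isUnit_dft hg hgm hω hmu, Fin.forall_iff]
  simp only [dft_apply_sum]

/-- Let `R` be a commutative halidon ring with index `m` and primitive `m`-th root of
unity `ω`, let `G = ⟨g⟩` be cyclic of order `m`, and let `u = ∑_j a_j g^j ∈ RG` with
associated elements `λ_r = ∑_j a_j ω^{j r}`.  Then `u` is a unit of the group ring `RG`
iff every `λ_r` is a unit of `R`. -/
theorem groupRing_isUnit_iff {R G : Type*} [CommRing R] [Group G] [Fintype G]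
    (m : ℕ) (hm : 0 < m) (ω : R) (hω : IsPrimitiveHalidonRoot m ω)
    (hmu : IsUnit (m : R))
    (g : G) (hg : ∀ x : G, x ∈ Subgroup.zpowers g) (hcard : Fintype.card G = m)
    (a : ℕ → R) :
    IsUnit (∑ j ∈ Finset.range m, MonoidAlgebra.single (g ^ j) (a j)) ↔
      ∀ r < m, IsUnit (∑ j ∈ Finset.range m, a j * ω ^ (j * r)) :=
  groupRing_isUnit_iff_general m ω hω hmu g hg hcard a
end

section
/- Let R be a commutative halidon ring with index m and primitive m-th root of unity ω, let G be a cyclic group of order m with generator g, and let u = ∑_{j=0}^{m−1} a_j g^j be an element of the group ring RG with associated elements λ_r = ∑_{j=0}^{m−1} a_j ω^{j·r} for r = 0,…,m−1. Then u is an idempotent of RG (u² = u) if and only if every λ_r is an idempotent of R (λ_r² = λ_r). -/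
/-!
For each `r`, the character `g ↦ ω ^ r` of `G` (well defined because `ω ^ m = 1`) extends to an
algebra map `RG → R` sending `u` to `λ_r`, so idempotence of `u` passes to every `λ_r`.
Conversely, the orthogonality relations `∑_r ω ^ (r k) = 0` give Fourier inversion
`m • v(g ^ k) = ∑_r λ_r(v) ω ^ (-r k)`; as `m` is invertible, these algebra maps are jointly
injective, and applying this to `u * u - u` gives the converse.
-/
open Finset MonoidAlgebra Subgroup

namespace CyclicFourier

variable {R G : Type*} [CommRing R] [Group G] {g : G} (hg : ∀ x, x ∈ zpowers g)
  {ζ : Rˣ} (hζ : ζ ^ orderOf g = 1)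

noncomputable def cyclicChar : G →* Rˣ :=
  monoidHomOfForallMemZpowers hg (orderOf_dvd_of_pow_eq_one hζ)

lemma cyclicChar_pow (j : ℕ) : cyclicChar hg hζ (g ^ j) = ζ ^ j := by
  rw [map_pow, cyclicChar, monoidHomOfForallMemZpowers_apply_gen]

lemma sum_cyclicChar_pow_of_ne_one [Finite G]
    (horth : ∀ k, 0 < k → k < orderOf g → ∑ r ∈ range (orderOf g), (ζ : R) ^ (r * k) = 0)
    {y : G} (hy : y ≠ 1) :
    ∑ r ∈ range (orderOf g), (cyclicChar hg hζ y : R) ^ r = 0 := by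
  obtain ⟨j, rfl : g ^ j = y⟩ := mem_powers_iff_mem_zpowers.2 (hg y)
  rw [← pow_mod_orderOf] at hy ⊢
  have hj : 0 < j % orderOf g := Nat.pos_of_ne_zero fun h ↦ hy (by rw [h, pow_zero])
  rw [← horth _ hj (Nat.mod_lt _ (orderOf_pos g))]
  refine sum_congr rfl fun r _ ↦ ?_
  rw [cyclicChar_pow, Units.val_pow_eq_pow_val, ← pow_mul, mul_comm]

noncomputable def fourierEval (r : ℕ) : MonoidAlgebra R G →ₐ[R] R :=
  lift R R G ((powMonoidHom r).comp ((Units.coeHom R).comp (cyclicChar hg hζ)))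

lemma fourierEval_single (r : ℕ) (x : G) (a : R) :
    fourierEval hg hζ r (single x a) = a * (cyclicChar hg hζ x : R) ^ r := by
  simp [fourierEval]

lemma fourierEval_apply [Fintype G] (r : ℕ) (v : MonoidAlgebra R G) :
    fourierEval hg hζ r v = ∑ x, v.coeff x * (cyclicChar hg hζ x : R) ^ r := by
  rw [fourierEval, lift_apply, Finsupp.sum_fintype _ _ (by simp)]
  simp

lemma fourierEval_sum_single (a : ℕ → R) (n r : ℕ) :
    fourierEval hg hζ r (∑ j ∈ range n, single (g ^ j) (a j)) =
      ∑ j ∈ range n, a j * (ζ : R) ^ (j * r) := by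
  simp only [map_sum, fourierEval_single, cyclicChar_pow, Units.val_pow_eq_pow_val, pow_mul]

variable [Fintype G]
  (horth : ∀ k, 0 < k → k < orderOf g → ∑ r ∈ range (orderOf g), (ζ : R) ^ (r * k) = 0)
include horth

lemma sum_fourierEval_mul_cyclicChar_inv (v : MonoidAlgebra R G) (x : G) :
    ∑ r ∈ range (orderOf g), fourierEval hg hζ r v * (cyclicChar hg hζ x⁻¹ : R) ^ r =
      orderOf g * v.coeff x := by
  classical
  calc _ = ∑ y, v.coeff y *
          ∑ r ∈ range (orderOf g), (cyclicChar hg hζ (y * x⁻¹) : R) ^ r := by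
        simp only [fourierEval_apply, sum_mul, mul_sum, map_mul, Units.val_mul, mul_pow, mul_assoc]
        exact sum_comm
    _ = ∑ y, v.coeff y * if y = x then (orderOf g : R) else 0 := by
        refine sum_congr rfl fun y _ ↦ ?_
        split_ifs with hyx
        · simp [hyx]
        · rw [sum_cyclicChar_pow_of_ne_one hg hζ horth (mul_inv_eq_one.not.2 hyx)]
    _ = orderOf g * v.coeff x := by simp [mul_comm]

lemma eq_zero_of_forall_fourierEval_eq_zero (hunit : IsUnit (orderOf g : R))
    {v : MonoidAlgebra R G} (hv : ∀ r < orderOf g, fourierEval hg hζ r v = 0) : v = 0 := by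
  ext x
  have := sum_fourierEval_mul_cyclicChar_inv hg hζ horth v x
  rw [sum_eq_zero fun r hr ↦ by rw [hv r (mem_range.1 hr), zero_mul], eq_comm,
    hunit.mul_right_eq_zero] at this
  simpa using this

lemma isIdempotentElem_iff_forall_fourierEval (hunit : IsUnit (orderOf g : R))
    (u : MonoidAlgebra R G) :
    IsIdempotentElem u ↔ ∀ r < orderOf g, IsIdempotentElem (fourierEval hg hζ r u) := by
  refine ⟨fun hu r _ ↦ hu.map _, fun hu ↦ ?_⟩
  rw [IsIdempotentElem, ← sub_eq_zero]
  refine eq_zero_of_forall_fourierEval_eq_zero hg hζ horth hunit fun r hr ↦ ?_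
  rw [map_sub, map_mul, hu r hr, sub_self]

end CyclicFourier

open CyclicFourier in
theorem groupRing_isIdempotent_iff_general {R G : Type*} [CommRing R] [Group G] [Fintype G]
    (m : ℕ) (ω : R) (hω : IsPrimitiveHalidonRoot m ω)
    (hmu : IsUnit (m : R))
    (g : G) (hg : ∀ x : G, x ∈ Subgroup.zpowers g) (hcard : Fintype.card G = m)
    (a : ℕ → R) :
    (∑ j ∈ Finset.range m, MonoidAlgebra.single (g ^ j) (a j)) ^ 2 =
        (∑ j ∈ Finset.range m, MonoidAlgebra.single (g ^ j) (a j)) ↔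
      ∀ r < m, (∑ j ∈ Finset.range m, a j * ω ^ (j * r)) ^ 2 =
        ∑ j ∈ Finset.range m, a j * ω ^ (j * r) := by
  have hord : orderOf g = m := by
    rw [orderOf_eq_card_of_forall_mem_zpowers hg, Nat.card_eq_fintype_card, hcard]
  subst hord
  obtain ⟨hω1, -, horth⟩ := hω
  obtain ⟨ζ, rfl⟩ := IsUnit.of_pow_eq_one hω1 (orderOf_pos g).ne'
  have hζ : ζ ^ orderOf g = 1 := Units.ext (by simpa using hω1)
  simpa only [sq, IsIdempotentElem, fourierEval_sum_single] using
    isIdempotentElem_iff_forall_fourierEval hg hζ horth hmu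
      (∑ j ∈ range _, single (g ^ j) (a j))

/-- Let `R` be a commutative halidon ring with index `m` and primitive `m`-th root of
unity `ω`, let `G = ⟨g⟩` be cyclic of order `m`, and let `u = ∑_j a_j g^j ∈ RG` with
associated elements `λ_r = ∑_j a_j ω^{j r}`.  Then `u` is an idempotent of the group
ring `RG` iff every `λ_r` is an idempotent of `R`. -/
theorem groupRing_isIdempotent_iff {R G : Type*} [CommRing R] [Group G] [Fintype G]
    (m : ℕ) (hm : 0 < m) (ω : R) (hω : IsPrimitiveHalidonRoot m ω)
    (hmu : IsUnit (m : R))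
    (g : G) (hg : ∀ x : G, x ∈ Subgroup.zpowers g) (hcard : Fintype.card G = m)
    (a : ℕ → R) :
    (∑ j ∈ Finset.range m, MonoidAlgebra.single (g ^ j) (a j)) ^ 2 =
        (∑ j ∈ Finset.range m, MonoidAlgebra.single (g ^ j) (a j)) ↔
      ∀ r < m, (∑ j ∈ Finset.range m, a j * ω ^ (j * r)) ^ 2 =
        ∑ j ∈ Finset.range m, a j * ω ^ (j * r) :=
  groupRing_isIdempotent_iff_general m ω hω hmu g hg hcard a
end

section
/- Let R be a finite commutative halidon ring with index m and let G be a cyclic group of order m. Then the number of units of the group ring RG equals the number of units of R raised to the power |G| = m; that is, |U(RG)| = |U(R)|^m. -/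
/-!
The characters `i ↦ ω ^ (i * j)` of `ZMod m` assemble into a ring homomorphism
`R[ZMod m] →+* (ZMod m → R)`, which on coefficients is multiplication by the Fourier matrix
`W = (ω ^ (i * j))`. The orthogonality relations `∑ j, ω ^ (k * j) = if k = 0 then m else 0`
give `W * (ω ^ (-(i * j))) = m • 1`, so `W` is invertible once `m` is a unit. Hence
`R[G] ≃+* R ^ m` for `G` cyclic of order `m`, and taking units gives `U(R[G]) ≃* U(R) ^ m`.
-/

open Finset Matrix

theorem ZMod.sum_univ_val_eq_sum_range {M : Type*} [AddCommMonoid M] {m : ℕ} [NeZero m]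
    (f : ℕ → M) : ∑ j : ZMod m, f j.val = ∑ r ∈ range m, f r := by
  obtain ⟨n, rfl⟩ := Nat.exists_eq_succ_of_ne_zero (NeZero.ne m)
  exact Fin.sum_univ_eq_sum_range f (n + 1)

namespace CyclicGroupRing

variable {R : Type*} [CommRing R] {m : ℕ} {ω : R}

theorem pow_val_mul_val (hω : ω ^ m = 1) (a b : ZMod m) :
    ω ^ (a * b).val = ω ^ (a.val * b.val) :=
  pow_eq_pow_of_modEq (by rw [ZMod.val_mul]; exact Nat.mod_modEq _ _) hω

variable (m ω) in
def dftMatrix : Matrix (ZMod m) (ZMod m) R :=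
  Matrix.of fun i j => ω ^ (i * j).val

variable [NeZero m]

theorem pow_val_add (hω : ω ^ m = 1) (a b : ZMod m) :
    ω ^ (a + b).val = ω ^ a.val * ω ^ b.val := by
  rw [← pow_add]
  exact pow_eq_pow_of_modEq (by rw [ZMod.val_add]; exact Nat.mod_modEq _ _) hω

theorem sum_pow_val_mul
    (hsum : ∀ k : ℕ, 0 < k → k < m → ∑ r ∈ range m, ω ^ (r * k) = 0) (hω : ω ^ m = 1)
    (k : ZMod m) : ∑ j : ZMod m, ω ^ (k * j).val = if k = 0 then (m : R) else 0 := by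
  split_ifs with hk
  · simp [hk]
  · simp_rw [pow_val_mul_val hω, mul_comm k.val]
    rw [ZMod.sum_univ_val_eq_sum_range (fun r => ω ^ (r * k.val))]
    exact hsum _ (Nat.pos_of_ne_zero ((ZMod.val_ne_zero k).2 hk)) (ZMod.val_lt k)

theorem dftMatrix_mul_dftMatrix_neg
    (hsum : ∀ k : ℕ, 0 < k → k < m → ∑ r ∈ range m, ω ^ (r * k) = 0) (hω : ω ^ m = 1) :
    dftMatrix m ω * (dftMatrix m ω).submatrix id Neg.neg = (m : R) • 1 := by
  ext i k
  have hentry : ∀ j, ω ^ (i * j).val * ω ^ (j * -k).val = ω ^ ((i - k) * j).val := fun j => by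
    rw [← pow_val_add hω]; congr 2; ring
  simp only [mul_apply, dftMatrix, submatrix_apply, of_apply, id, hentry,
    sum_pow_val_mul hsum hω, sub_eq_zero, Matrix.smul_apply, one_apply, smul_eq_mul, mul_ite,
    mul_one, mul_zero]

theorem isUnit_dftMatrix (hm : IsUnit (m : R))
    (hsum : ∀ k : ℕ, 0 < k → k < m → ∑ r ∈ range m, ω ^ (r * k) = 0) (hω : ω ^ m = 1) :
    IsUnit (dftMatrix m ω) := by
  refine isUnit_iff_exists_inv.2
    ⟨((hm.unit⁻¹ : Rˣ) : R) • (dftMatrix m ω).submatrix id Neg.neg, ?_⟩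
  rw [mul_smul_comm, dftMatrix_mul_dftMatrix_neg hsum hω, smul_smul, hm.val_inv_mul, one_smul]

def character (hω : ω ^ m = 1) (j : ZMod m) : Multiplicative (ZMod m) →* R where
  toFun i := dftMatrix m ω i.toAdd j
  map_one' := by simp [dftMatrix]
  map_mul' a b := by simp only [dftMatrix, of_apply, toAdd_mul, add_mul, pow_val_add hω]

noncomputable def fourierTransform (hω : ω ^ m = 1) :
    MonoidAlgebra R (Multiplicative (ZMod m)) →+* (ZMod m → R) :=
  RingHom.pi fun j => (MonoidAlgebra.lift R R _ (character hω j)).toRingHom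

theorem fourierTransform_apply (hω : ω ^ m = 1)
    (f : MonoidAlgebra R (Multiplicative (ZMod m))) :
    fourierTransform hω f = (fun i => f.coeff (.ofAdd i)) ᵥ* dftMatrix m ω := by
  ext j
  change MonoidAlgebra.lift R R _ (character hω j) f = _
  rw [MonoidAlgebra.lift_apply, Finsupp.sum_fintype _ _ (by simp)]
  exact Fintype.sum_equiv Multiplicative.toAdd _ _ fun _ => rfl

theorem fourierTransform_bijective (hm : IsUnit (m : R))
    (hsum : ∀ k : ℕ, 0 < k → k < m → ∑ r ∈ range m, ω ^ (r * k) = 0) (hω : ω ^ m = 1) :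
    Function.Bijective (fourierTransform hω) := by
  have hW := isUnit_dftMatrix hm hsum hω
  have hvecMul : Function.Bijective (· ᵥ* dftMatrix m ω) :=
    ⟨vecMul_injective_of_isUnit hW, vecMul_surjective_iff_isUnit.2 hW⟩
  have : ⇑(fourierTransform hω) = (· ᵥ* dftMatrix m ω) ∘
      (MonoidAlgebra.coeffEquiv.trans Finsupp.equivFunOnFinite) :=
    funext (fourierTransform_apply hω)
  rw [this]
  exact hvecMul.comp (Equiv.bijective _)

end CyclicGroupRing

theorem card_units_groupRing_general {R G : Type*} [CommRing R] [Group G] [Fintype G]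
    (m : ℕ) (hR : IsHalidonRing R m)
    (hG : IsCyclic G) (hcard : Fintype.card G = m) :
    Nat.card (MonoidAlgebra R G)ˣ = Nat.card Rˣ ^ m := by
  obtain ⟨hm, ω, hω, -, hsum⟩ := hR
  obtain rfl : Nat.card G = m := Nat.card_eq_fintype_card.trans hcard
  have : NeZero (Nat.card G) := ⟨Nat.card_pos.ne'⟩
  let e : MonoidAlgebra R G ≃+* (ZMod (Nat.card G) → R) :=
    (MonoidAlgebra.domCongr R R (zmodCyclicMulEquiv hG).symm).toRingEquiv.trans
      (RingEquiv.ofBijective _ (CyclicGroupRing.fourierTransform_bijective hm hsum hω))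
  calc Nat.card (MonoidAlgebra R G)ˣ = Nat.card (ZMod (Nat.card G) → Rˣ) :=
        Nat.card_congr ((Units.mapEquiv e.toMulEquiv).trans MulEquiv.piUnits).toEquiv
    _ = Nat.card Rˣ ^ Nat.card G := by rw [Nat.card_fun, Nat.card_zmod]

/-- If `R` is a finite commutative halidon ring with index `m` and `G` is a cyclic
group of order `m`, then the group ring `RG` has `|U(R)|^m` units. -/
theorem card_units_groupRing {R G : Type*} [CommRing R] [Fintype R] [Group G] [Fintype G]
    (m : ℕ) (hm : 0 < m) (hR : IsHalidonRing R m)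
    (hG : IsCyclic G) (hcard : Fintype.card G = m) :
    Nat.card (MonoidAlgebra R G)ˣ = Nat.card Rˣ ^ m :=
  card_units_groupRing_general m hR hG hcard
end
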